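/- Let δ > 0, τ > 0, and let (A, ζ₄) with A > 0 be a nontrivial equilibrium (f₁ = f₂ = 0), with Jacobian J there. If 0 < A < 1 then det J < 0, so J has one positive and one negative real eigenvalue (the equilibrium is a saddle). If A > 1 then det J > 0, and both eigenvalues of J have negative real part if and only if τ < 1/δ; moreover, when A > 1 and τ = 1/δ, the eigenvalues of J are the purely imaginary pair ±i√(det J) (a Hopf bifurcation). -/

import Mathlib

open Matrix

/-- Right-hand side of the slow-flow amplitude equation for the 4-node network. -/
noncomputable def f₁ (A ζ₄ : ℝ) : ℝ :=
  (1 / 4) * ((1 - ζ₄) * A + 5 / 4 * A ^ 3 - 5 / 16 * A ^ 5)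

/-- Right-hand side of the autonomous damping dynamics for the 4-node network. -/
noncomputable def f₂ (δ τ A ζ₄ : ℝ) : ℝ :=
  τ⁻¹ * (-ζ₄ + δ + 1 + 5 / 8 * A ^ 2)

/-- Jacobian matrix of the planar vector field `(f₁, f₂)` with respect to `(A, ζ₄)`. -/
noncomputable def J (δ τ A ζ₄ : ℝ) : Matrix (Fin 2) (Fin 2) ℝ :=
  !![deriv (fun a => f₁ a ζ₄) A, deriv (fun z => f₁ A z) ζ₄;
     deriv (fun a => f₂ δ τ a ζ₄) A, deriv (fun z => f₂ δ τ A z) ζ₄]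

/-! At a nontrivial equilibrium, `f₂ = 0` fixes `ζ₄ = δ + 1 + 5A²/8`, and then `f₁ / A = 0`
forces `δ = 5A²/8 - 5A⁴/16`. This makes the Jacobian `!![δ, -A/4; 5A/(4τ), -1/τ]`, with trace
`δ - 1/τ` and determinant `5A²(A² - 1)/(16τ)`. The spectrum of a `2 × 2` matrix is the root set
of `μ² - (tr J) μ + det J`, so the sign of `A² - 1` decides whether the equilibrium is a saddle;
when `det J > 0` both roots lie in the left half-plane iff the trace is negative, and a vanishing
trace leaves the roots `±i√(det J)`. -/

namespace Matrix

theorem spectrum_fin_two {K : Type*} [Field K] (M : Matrix (Fin 2) (Fin 2) K) :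
    spectrum K M = {μ | μ ^ 2 - M.trace * μ + M.det = 0} := by
  ext μ
  simp [mem_spectrum_iff_isRoot_charpoly, charpoly_fin_two]

theorem spectrum_map_ofReal_fin_two (M : Matrix (Fin 2) (Fin 2) ℝ) :
    spectrum ℂ (M.map Complex.ofReal) = {μ : ℂ | μ ^ 2 - M.trace * μ + M.det = 0} := by
  simp [spectrum_fin_two, trace_fin_two, det_fin_two]

end Matrix

theorem exists_neg_pos_quadratic_roots {T D : ℝ} (hD : D < 0) :
    ∃ μ₁ μ₂ : ℝ, μ₁ < 0 ∧ 0 < μ₂ ∧ {μ | μ ^ 2 - T * μ + D = 0} = {μ₁, μ₂} := by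
  set s := √(discrim 1 (-T) D)
  have hdisc : 0 ≤ discrim 1 (-T) D := by rw [discrim]; nlinarith [sq_nonneg T]
  have hs : discrim 1 (-T) D = s * s := (Real.mul_self_sqrt hdisc).symm
  have hTs : |T| < s := by
    rw [← Real.sqrt_sq_eq_abs]
    exact Real.sqrt_lt_sqrt (sq_nonneg T) (by rw [discrim]; linarith)
  refine ⟨(T - s) / 2, (T + s) / 2, by linarith [le_abs_self T], by linarith [neg_abs_le T], ?_⟩
  ext μ
  have := quadratic_eq_zero_iff one_ne_zero hs μ
  simp only [Set.mem_ofPred_eq, Set.mem_insert_iff, Set.mem_singleton_iff]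
  rw [or_comm]
  convert this using 2 <;> ring_nf

theorem Complex.quadratic_roots_re_neg_iff {T D : ℝ} (hD : 0 < D) :
    (∀ μ : ℂ, μ ^ 2 - T * μ + D = 0 → μ.re < 0) ↔ T < 0 := by
  constructor
  · intro h
    obtain ⟨s, hs⟩ := IsAlgClosed.exists_eq_mul_self ((T : ℂ) ^ 2 - 4 * D)
    obtain ⟨μ, hμ⟩ : ∃ μ : ℂ, μ ^ 2 - T * μ + D = 0 :=
      ⟨(T + s) / 2, by linear_combination (-1 / 4 : ℂ) * hs⟩
    -- Vieta: the second root is `T - μ`, and the real parts of the two roots add up to `T`.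
    have hν := h (T - μ) (by linear_combination hμ)
    have := h μ hμ
    simp only [Complex.sub_re, Complex.ofReal_re] at hν
    linarith
  · intro hT μ hμ
    have hre := congrArg Complex.re hμ
    have him := congrArg Complex.im hμ
    simp only [pow_two, Complex.add_re, Complex.sub_re, Complex.mul_re, Complex.mul_im,
      Complex.add_im, Complex.sub_im, Complex.ofReal_re, Complex.ofReal_im,
      Complex.zero_re, Complex.zero_im] at hre him
    rcases mul_eq_zero.mp (show μ.im * (2 * μ.re - T) = 0 by linear_combination him) with h | h
    · rw [h] at hre
      nlinarith
    · linarith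

theorem Complex.setOf_sq_add_eq_zero {D : ℝ} (hD : 0 ≤ D) :
    {μ : ℂ | μ ^ 2 + D = 0} = {I * √D, -(I * √D)} := by
  have hsq : ((√D : ℝ) : ℂ) ^ 2 = D := by exact_mod_cast Real.sq_sqrt hD
  ext μ
  simp only [Set.mem_ofPred_eq, Set.mem_insert_iff, Set.mem_singleton_iff]
  rw [← sub_eq_zero (b := I * √D), ← add_eq_zero_iff_eq_neg, ← mul_eq_zero]
  constructor <;> intro h
  · linear_combination h - (√D : ℂ) ^ 2 * I_sq + hsq
  · linear_combination h + (√D : ℂ) ^ 2 * I_sq - hsq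

theorem J_eq (δ τ A ζ₄ : ℝ) :
    J δ τ A ζ₄ = !![(1 - ζ₄ + 15 / 4 * A ^ 2 - 25 / 16 * A ^ 4) / 4, -A / 4;
      τ⁻¹ * (5 / 4 * A), -τ⁻¹] := by
  have h11 : HasDerivAt (fun a => f₁ a ζ₄)
      ((1 - ζ₄ + 15 / 4 * A ^ 2 - 25 / 16 * A ^ 4) / 4) A := by
    unfold f₁
    exact ((((hasDerivAt_id A).const_mul (1 - ζ₄)).add
      ((hasDerivAt_pow 3 A).const_mul (5 / 4 : ℝ))).sub
      ((hasDerivAt_pow 5 A).const_mul (5 / 16 : ℝ))).const_mul (1 / 4 : ℝ) |>.congr_deriv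
      (by push_cast; ring)
  have h12 : HasDerivAt (fun z => f₁ A z) (-A / 4) ζ₄ := by
    unfold f₁
    exact (((((hasDerivAt_id ζ₄).const_sub 1).mul_const A).add_const (5 / 4 * A ^ 3)).sub_const
      (5 / 16 * A ^ 5)).const_mul (1 / 4 : ℝ) |>.congr_deriv (by ring)
  have h21 : HasDerivAt (fun a => f₂ δ τ a ζ₄) (τ⁻¹ * (5 / 4 * A)) A := by
    unfold f₂
    exact (((hasDerivAt_pow 2 A).const_mul (5 / 8 : ℝ)).const_add (-ζ₄ + δ + 1)).const_mul τ⁻¹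
      |>.congr_deriv (by push_cast; ring)
  have h22 : HasDerivAt (fun z => f₂ δ τ A z) (-τ⁻¹) ζ₄ := by
    unfold f₂
    exact (((((hasDerivAt_id ζ₄).neg).add_const δ).add_const 1).add_const
      (5 / 8 * A ^ 2)).const_mul τ⁻¹ |>.congr_deriv (by ring)
  rw [_root_.J, h11.deriv, h12.deriv, h21.deriv, h22.deriv]

section Equilibrium

variable {δ τ A ζ₄ : ℝ}

theorem zeta_eq_of_f₂_eq_zero (hτ : τ ≠ 0) (h2 : f₂ δ τ A ζ₄ = 0) :
    ζ₄ = δ + 1 + 5 / 8 * A ^ 2 := by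
  rw [f₂, mul_eq_zero] at h2
  rcases h2 with h | h
  · exact absurd h (inv_ne_zero hτ)
  · linarith

theorem delta_eq_of_equilibrium (hτ : τ ≠ 0) (hA : A ≠ 0) (h1 : f₁ A ζ₄ = 0)
    (h2 : f₂ δ τ A ζ₄ = 0) : δ = 5 / 8 * A ^ 2 - 5 / 16 * A ^ 4 := by
  have hζ := zeta_eq_of_f₂_eq_zero hτ h2
  have h : A * (5 / 8 * A ^ 2 - 5 / 16 * A ^ 4 - δ) = 0 := by
    rw [f₁, hζ] at h1
    linear_combination 4 * h1
  linarith [(mul_eq_zero.mp h).resolve_left hA]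

theorem J_of_equilibrium (hτ : τ ≠ 0) (hA : A ≠ 0) (h1 : f₁ A ζ₄ = 0)
    (h2 : f₂ δ τ A ζ₄ = 0) : J δ τ A ζ₄ = !![δ, -A / 4; τ⁻¹ * (5 / 4 * A), -τ⁻¹] := by
  have hδ := delta_eq_of_equilibrium hτ hA h1 h2
  rw [J_eq, zeta_eq_of_f₂_eq_zero hτ h2]
  congr
  linear_combination (-5 / 4 : ℝ) * hδ

theorem trace_J_of_equilibrium (hτ : τ ≠ 0) (hA : A ≠ 0) (h1 : f₁ A ζ₄ = 0)
    (h2 : f₂ δ τ A ζ₄ = 0) : (J δ τ A ζ₄).trace = δ - τ⁻¹ := by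
  rw [J_of_equilibrium hτ hA h1 h2, trace_fin_two_of, sub_eq_add_neg]

theorem det_J_of_equilibrium (hτ : τ ≠ 0) (hA : A ≠ 0) (h1 : f₁ A ζ₄ = 0)
    (h2 : f₂ δ τ A ζ₄ = 0) : (J δ τ A ζ₄).det = 5 / 16 * τ⁻¹ * A ^ 2 * (A ^ 2 - 1) := by
  rw [J_of_equilibrium hτ hA h1 h2, det_fin_two_of]
  linear_combination -τ⁻¹ * delta_eq_of_equilibrium hτ hA h1 h2

end Equilibrium

/-- Stability of the nontrivial equilibria: for `A < 1` the equilibrium is a saddle;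
for `A > 1` it is stable iff `τ < 1/δ`, with a Hopf bifurcation (purely imaginary
eigenvalue pair) at `τ = 1/δ`. -/
theorem stmt_6 (δ τ A ζ₄ : ℝ) (hδ : 0 < δ) (hτ : 0 < τ) (hA : 0 < A)
    (h1 : f₁ A ζ₄ = 0) (h2 : f₂ δ τ A ζ₄ = 0) :
    (A < 1 →
      (J δ τ A ζ₄).det < 0 ∧
      ∃ μ₁ μ₂ : ℝ, μ₁ < 0 ∧ 0 < μ₂ ∧ spectrum ℝ (J δ τ A ζ₄) = {μ₁, μ₂}) ∧
    (1 < A →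
      0 < (J δ τ A ζ₄).det ∧
      ((∀ μ ∈ spectrum ℂ ((J δ τ A ζ₄).map Complex.ofReal), μ.re < 0) ↔ τ < 1 / δ)) ∧
    (1 < A → τ = 1 / δ →
      spectrum ℂ ((J δ τ A ζ₄).map Complex.ofReal) =
        {Complex.I * (Real.sqrt (J δ τ A ζ₄).det : ℂ),
         -(Complex.I * (Real.sqrt (J δ τ A ζ₄).det : ℂ))}) := by
  have hT := trace_J_of_equilibrium hτ.ne' hA.ne' h1 h2
  have hD := det_J_of_equilibrium hτ.ne' hA.ne' h1 h2
  have hD_pos (hA1 : 1 < A) : 0 < (J δ τ A ζ₄).det := by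
    rw [hD]
    have : 1 < A ^ 2 := by nlinarith
    have : 0 < A ^ 2 - 1 := by linarith
    positivity
  rw [spectrum_fin_two, spectrum_map_ofReal_fin_two]
  refine ⟨fun hA1 => ?_, fun hA1 => ⟨hD_pos hA1, ?_⟩, fun hA1 hτδ => ?_⟩
  · have hD_neg : (J δ τ A ζ₄).det < 0 := by
      rw [hD]
      have : A ^ 2 < 1 := by nlinarith
      exact mul_neg_of_pos_of_neg (by positivity) (by linarith)
    exact ⟨hD_neg, exists_neg_pos_quadratic_roots hD_neg⟩
  · simp only [Set.mem_ofPred_eq]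
    rw [Complex.quadratic_roots_re_neg_iff (hD_pos hA1), hT, sub_neg, ← one_div,
      lt_one_div hδ hτ]
  · have hT0 : (J δ τ A ζ₄).trace = 0 := by rw [hT, hτδ, one_div, inv_inv, sub_self]
    simp only [hT0, Complex.ofReal_zero, zero_mul, sub_zero]
    exact Complex.setOf_sq_add_eq_zero (hD_pos hA1).le
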